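/- In the quasi-consecutive pattern poset, suppose σ occurs precisely once in τ = a_1 a_2 ⋯ a_n and the unique occurrence involves a_2 but not a_1 and not a_n. Then μ(σ, τ) = 1 if [σ, τ] has rank 2, and μ(σ, τ) = 0 otherwise. -/

import Mathlib

open scoped Classical

/-- A finite permutation of arbitrary length: a length `n` together with a
permutation of `Fin n` (in one-line notation, the entry at position `i` is
its value at `i`). -/
abbrev QPerm : Type := Σ n : ℕ, Equiv.Perm (Fin n)

/-- `IsOcc a σ τ f` : the strictly monotone position map `f` selects an
occurrence of the pattern `σ` in `τ` (order-isomorphically), where for every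
gap index `j ≥ 1` (1-indexed) with `a j = false` the `j`-th and `(j+1)`-th
selected positions must be adjacent in `τ`. -/
def IsOcc (a : ℕ → Bool) {k n : ℕ} (σ : Equiv.Perm (Fin k)) (τ : Equiv.Perm (Fin n))
    (f : Fin k → Fin n) : Prop :=
  StrictMono f ∧ (∀ i j : Fin k, σ i < σ j ↔ τ (f i) < τ (f j)) ∧
    ∀ (i : ℕ) (h : i + 1 < k), a (i + 1) = false →
      (f ⟨i + 1, h⟩ : ℕ) = (f ⟨i, Nat.lt_of_succ_lt h⟩ : ℕ) + 1

/-- `σ` occurs in `τ` as an `a`-vincular pattern. -/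
def VOcc (a : ℕ → Bool) (σ τ : QPerm) : Prop :=
  ∃ f : Fin σ.1 → Fin τ.1, IsOcc a σ.2 τ.2 f

/-- Covering relation of the `a`-vincular pattern poset. -/
def VCov (a : ℕ → Bool) (σ τ : QPerm) : Prop :=
  σ.1 + 1 = τ.1 ∧ VOcc a σ τ

/-- The `a`-vincular pattern order: reflexive-transitive closure of covering. -/
def VLe (a : ℕ → Bool) (σ τ : QPerm) : Prop :=
  Relation.ReflTransGen (VCov a) σ τ

/-- Occurrence as an `A`-vincular pattern for a matrix `A` (rows and columns
1-indexed via `A i j`); a pattern of length `k` uses row `k - 1`. -/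
def MOcc (A : ℕ → ℕ → Bool) (σ τ : QPerm) : Prop :=
  VOcc (fun j => A (σ.1 - 1) j) σ τ

/-- Covering relation of the `A`-vincular pattern poset. -/
def MCov (A : ℕ → ℕ → Bool) (σ τ : QPerm) : Prop :=
  σ.1 + 1 = τ.1 ∧ MOcc A σ τ

/-- The `A`-vincular pattern order. -/
def MLe (A : ℕ → ℕ → Bool) (σ τ : QPerm) : Prop :=
  Relation.ReflTransGen (MCov A) σ τ

/-- The quasi-consecutive adjacency vector `a = (1,0,0,…)` (1-indexed). -/
def qa : ℕ → Bool := fun j => decide (j = 1)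

/-- Quasi-consecutive pattern occurrence. -/
def QOcc (σ τ : QPerm) : Prop := VOcc qa σ τ

/-- Covering in the quasi-consecutive pattern poset. -/
def QCov (σ τ : QPerm) : Prop := VCov qa σ τ

/-- The quasi-consecutive pattern poset order. -/
def QLe (σ τ : QPerm) : Prop := VLe qa σ τ

/-- All permutations of length at most `n`, as a finset. -/
def permsUpTo (n : ℕ) : Finset QPerm :=
  (Finset.range (n + 1)).sigma fun _ => Finset.univ

/-- Möbius function of the quasi-consecutive pattern poset, computed with
fuel (the fuel `τ.1` always suffices, since lengths strictly increase along
the order). -/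
noncomputable def qMuAux : ℕ → QPerm → QPerm → ℤ
  | 0, σ, τ => if σ = τ then 1 else 0
  | m + 1, σ, τ =>
      if σ = τ then 1
      else -∑ z ∈ (permsUpTo τ.1).filter fun z => QLe σ z ∧ QLe z τ ∧ z ≠ τ,
            qMuAux m σ z

/-- The Möbius function of the quasi-consecutive pattern poset. -/
noncomputable def qMu (σ τ : QPerm) : ℤ := qMuAux τ.1 σ τ

/-- The interval `[σ, τ]` in the quasi-consecutive pattern poset. -/
def QInterval (σ τ : QPerm) : Set QPerm := {ρ | QLe σ ρ ∧ QLe ρ τ}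

/-- The interval `[σ, τ]` is a chain. -/
def QChain (σ τ : QPerm) : Prop :=
  ∀ ρ₁ ρ₂ : QPerm, ρ₁ ∈ QInterval σ τ → ρ₂ ∈ QInterval σ τ → QLe ρ₁ ρ₂ ∨ QLe ρ₂ ρ₁

/-- The interval `[σ, τ]` is order-isomorphic to the product of a chain with
`p + 1` elements and a chain with `q + 1` elements (componentwise order). -/
def IsGridInterval (σ τ : QPerm) (p q : ℕ) : Prop :=
  ∃ e : QInterval σ τ ≃ Fin (p + 1) × Fin (q + 1),
    ∀ ρ₁ ρ₂ : QInterval σ τ, QLe ρ₁.1 ρ₂.1 ↔ e ρ₁ ≤ e ρ₂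

/-- The occurrence `f` involves position `i` (0-indexed) of the big permutation. -/
def Involves {k n : ℕ} (f : Fin k → Fin n) (i : ℕ) : Prop :=
  ∃ j : Fin k, (f j : ℕ) = i

/-- The occurrence `f` is consecutive: all selected positions are adjacent. -/
def ConsecOcc {k n : ℕ} (f : Fin k → Fin n) : Prop :=
  ∀ (i : ℕ) (h : i + 1 < k),
    (f ⟨i + 1, h⟩ : ℕ) = (f ⟨i, Nat.lt_of_succ_lt h⟩ : ℕ) + 1

/-- The first two entries of `τ` are not consecutive integers. -/
def NotConsecFirstTwo (τ : QPerm) : Prop :=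
  ∀ i j : Fin τ.1, (i : ℕ) = 0 → (j : ℕ) = 1 →
    (τ.2 i : ℕ) + 1 ≠ (τ.2 j : ℕ) ∧ (τ.2 j : ℕ) + 1 ≠ (τ.2 i : ℕ)

/-- `τ` is a monotone (increasing or decreasing) permutation. -/
def IsMonotonePerm (τ : QPerm) : Prop :=
  (∀ i j : Fin τ.1, i < j → τ.2 i < τ.2 j) ∨ (∀ i j : Fin τ.1, i < j → τ.2 j < τ.2 i)


/-!
The unique occurrence of `σ` in `τ` sits at the positions `1, b, b + 1, …, b + k - 2`
(0-indexed, `k = |σ|`, `n = |τ|`) with `2 ≤ b` and `b + k ≤ n`. Composing occurrences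
`σ → ρ → τ` must give this occurrence, which forces every `ρ ∈ [σ, τ]` to be the pattern of `τ`
at a quasi-consecutive set of positions obtained from it by extending the consecutive block
`x ≤ b - 1` steps to the left and `y ≤ n + 1 - b - k` steps to the right, and `(x, y) ↦ ρ` is an
order isomorphism from a product of two chains onto `[σ, τ]`. Hence
`μ(σ, τ) = μ_chain(b - 1) · μ_chain(n + 1 - b - k)`: both indices are positive and sum to the
rank `n - k`, so the product is `1` at rank `2` and `0` otherwise.
-/

open Finset

lemma Equiv.Perm.inv_eq_sort_of_lt_iff {α : Type*} [LinearOrder α] {m : ℕ}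
    {π : Equiv.Perm (Fin m)} {v : Fin m → α} (h : ∀ i j, π i < π j ↔ v i < v j) :
    π⁻¹ = Tuple.sort v := by
  have hv : StrictMono (v ∘ ⇑π⁻¹) := fun a c hac => (h _ _).1 (by simpa using hac)
  exact Tuple.eq_sort_iff.2 ⟨hv.monotone, fun i j hij he => absurd he (hv hij).ne⟩

lemma Tuple.sort_inv_lt_iff {α : Type*} [LinearOrder α] {m : ℕ} {v : Fin m → α}
    (hv : Function.Injective v) (i j : Fin m) :
    (Tuple.sort v)⁻¹ i < (Tuple.sort v)⁻¹ j ↔ v i < v j := by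
  have hmono : StrictMono (v ∘ Tuple.sort v) :=
    (Tuple.monotone_sort v).strictMono_of_injective (hv.comp (Tuple.sort v).injective)
  simpa using (hmono.lt_iff_lt (a := (Tuple.sort v)⁻¹ i) (b := (Tuple.sort v)⁻¹ j)).symm

lemma isOcc_qa_iff {k n : ℕ} {σ : Equiv.Perm (Fin k)} {τ : Equiv.Perm (Fin n)}
    {u : Fin k → Fin n} :
    IsOcc qa σ τ u ↔ StrictMono u ∧ (∀ i j, σ i < σ j ↔ τ (u i) < τ (u j)) ∧
      ∀ i j : Fin k, 1 ≤ (i : ℕ) → (j : ℕ) = i + 1 → (u j : ℕ) = u i + 1 := by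
  refine and_congr_right fun _ => and_congr_right fun _ =>
    ⟨fun h ⟨i, _⟩ ⟨j, hj⟩ hi hij => ?_, fun h i hi hq => ?_⟩
  · simp only at hi hij
    subst hij
    exact h i hj (by simp only [qa, decide_eq_false_iff_not]; omega)
  · simp only [qa, decide_eq_false_iff_not] at hq
    exact h ⟨i, by omega⟩ ⟨i + 1, hi⟩ (show 1 ≤ i by omega) rfl

namespace QPerm

/-- Extended by the identity beyond `τ.1`, so that patterns of `τ` can be read along any
position map without bound conditions. -/
def onNat (τ : QPerm) (p : ℕ) : ℕ :=
  if h : p < τ.1 then τ.2 ⟨p, h⟩ else p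

lemma onNat_of_lt (τ : QPerm) {p : ℕ} (h : p < τ.1) : τ.onNat p = τ.2 ⟨p, h⟩ :=
  dif_pos h

lemma onNat_injective (τ : QPerm) : Function.Injective τ.onNat := by
  intro p q h
  simp only [onNat] at h
  split_ifs at h with hp hq hq
  · exact congrArg Fin.val (τ.2.injective (Fin.ext h))
  · have := (τ.2 ⟨p, hp⟩).isLt; omega
  · have := (τ.2 ⟨q, hq⟩).isLt; omega
  · exact h

/-- The pattern of the entries of `τ` at positions `g 0, …, g (m - 1)`: the inverse of the
permutation sorting them ranks them. -/
noncomputable def patternAt (τ : QPerm) (m : ℕ) (g : ℕ → ℕ) : QPerm :=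
  ⟨m, (Tuple.sort fun i : Fin m => τ.onNat (g i))⁻¹⟩

lemma patternAt_lt_iff (τ : QPerm) {m : ℕ} {g : ℕ → ℕ} (hg : Function.Injective g)
    (i j : Fin m) :
    (τ.patternAt m g).2 i < (τ.patternAt m g).2 j ↔ τ.onNat (g i) < τ.onNat (g j) :=
  Tuple.sort_inv_lt_iff (τ.onNat_injective.comp (hg.comp Fin.val_injective)) i j

lemma eq_patternAt {z τ : QPerm} {g : ℕ → ℕ}
    (h : ∀ i j : Fin z.1, z.2 i < z.2 j ↔ τ.onNat (g i) < τ.onNat (g j)) :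
    z = τ.patternAt z.1 g :=
  Sigma.ext rfl (heq_of_eq (inv_eq_iff_eq_inv.1 (Equiv.Perm.inv_eq_sort_of_lt_iff h)))

lemma patternAt_length_id (τ : QPerm) : τ.patternAt τ.1 id = τ :=
  (eq_patternAt fun i j => by rw [id, id, τ.onNat_of_lt i.2, τ.onNat_of_lt j.2]; rfl).symm

lemma eq_patternAt_of_isOcc {z τ : QPerm} {G : Fin z.1 → Fin τ.1} {g : ℕ → ℕ}
    (hG : IsOcc qa z.2 τ.2 G) (hg : ∀ i, (G i : ℕ) = g i) : z = τ.patternAt z.1 g :=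
  eq_patternAt fun i j => by
    rw [hG.2.1, ← hg, ← hg, τ.onNat_of_lt (G i).2, τ.onNat_of_lt (G j).2]
    rfl

lemma isOcc_patternAt_comp (τ : QPerm) {m m' : ℕ} {g h : ℕ → ℕ} (hg : StrictMono g)
    (hh : StrictMono h) (hadj : ∀ i, 1 ≤ i → h (i + 1) = h i + 1) (hlt : ∀ i < m, h i < m') :
    IsOcc qa (τ.patternAt m (g ∘ h)).2 (τ.patternAt m' g).2 fun i => ⟨h i, hlt i i.2⟩ := by
  refine isOcc_qa_iff.2 ⟨fun i j hij => hh hij, fun i j => ?_, fun i j hi hj => ?_⟩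
  · exact (τ.patternAt_lt_iff (hg.comp hh).injective i j).trans
      (τ.patternAt_lt_iff hg.injective ⟨h i, hlt i i.2⟩ ⟨h j, hlt j j.2⟩).symm
  · simp only [hj, hadj _ hi]

lemma isOcc_patternAt (τ : QPerm) {m : ℕ} {g : ℕ → ℕ} (hg : StrictMono g)
    (hadj : ∀ i, 1 ≤ i → g (i + 1) = g i + 1) (hlt : ∀ i < m, g i < τ.1) :
    IsOcc qa (τ.patternAt m g).2 τ.2 fun i => ⟨g i, hlt i i.2⟩ := by
  refine isOcc_qa_iff.2 ⟨fun i j hij => hg hij, fun i j => ?_, fun i j hi hj => ?_⟩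
  · exact (τ.patternAt_lt_iff hg.injective i j).trans
      (by rw [τ.onNat_of_lt (hlt i i.2), τ.onNat_of_lt (hlt j j.2)]; rfl)
  · simp only [hj, hadj _ hi]

end QPerm

lemma IsOcc.comp {k m n : ℕ} {σ : Equiv.Perm (Fin k)} {ρ : Equiv.Perm (Fin m)}
    {τ : Equiv.Perm (Fin n)} {g : Fin m → Fin n} {f : Fin k → Fin m}
    (hg : IsOcc qa ρ τ g) (hf : IsOcc qa σ ρ f) : IsOcc qa σ τ (g ∘ f) := by
  obtain ⟨hg₁, hg₂, hg₃⟩ := isOcc_qa_iff.1 hg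
  obtain ⟨hf₁, hf₂, hf₃⟩ := isOcc_qa_iff.1 hf
  refine isOcc_qa_iff.2 ⟨hg₁.comp hf₁, fun i j => (hf₂ i j).trans (hg₂ _ _), fun i j hi hj => ?_⟩
  have hpos : (f ⟨0, by omega⟩ : ℕ) < f i := hf₁ (Fin.mk_lt_mk.2 (by omega))
  exact hg₃ (f i) (f j) (by omega) (hf₃ i j hi hj)

lemma isOcc_const {k n : ℕ} {σ : Equiv.Perm (Fin k)} {τ : Equiv.Perm (Fin n)} (hk : k ≤ 1)
    (p : Fin n) : IsOcc qa σ τ fun _ => p := by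
  have hsub : ∀ i j : Fin k, i = j := fun i j => Fin.ext (by omega)
  refine isOcc_qa_iff.2 ⟨fun i j hij => ?_, fun i j => ?_, fun i j _ hj => ?_⟩
  · exact absurd (hsub i j) hij.ne
  · rw [hsub i j, lt_self_iff_false, lt_self_iff_false]
  · omega

def qpos (p s i : ℕ) : ℕ := if i = 0 then p else s + i - 1

lemma qpos_zero (p s : ℕ) : qpos p s 0 = p := rfl

lemma qpos_one (p s : ℕ) : qpos p s 1 = s := rfl

lemma qpos_of_ne_zero {p s i : ℕ} (hi : i ≠ 0) : qpos p s i = s + i - 1 := if_neg hi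

lemma qpos_strictMono {p s : ℕ} (h : p < s) : StrictMono (qpos p s) := by
  intro i j hij
  simp only [qpos]
  split_ifs <;> omega

lemma qpos_succ {p s i : ℕ} (hi : 1 ≤ i) : qpos p s (i + 1) = qpos p s i + 1 := by
  rw [qpos_of_ne_zero (by omega), qpos_of_ne_zero (by omega)]
  omega

lemma IsOcc.exists_qpos {k n : ℕ} {σ : Equiv.Perm (Fin k)} {τ : Equiv.Perm (Fin n)}
    {u : Fin k → Fin n} (hu : IsOcc qa σ τ u) (hk : 2 ≤ k) :
    ∃ p s, p < s ∧ ∀ i, (u i : ℕ) = qpos p s i := by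
  obtain ⟨hu₁, -, hu₃⟩ := isOcc_qa_iff.1 hu
  refine ⟨u ⟨0, by omega⟩, u ⟨1, hk⟩, hu₁ (Fin.mk_lt_mk.2 Nat.zero_lt_one), ?_⟩
  rintro ⟨i, hi⟩
  induction i with
  | zero => rfl
  | succ i ih =>
    rcases Nat.eq_zero_or_pos i with rfl | hpos
    · rfl
    · rw [hu₃ ⟨i, by omega⟩ ⟨i + 1, hi⟩ hpos rfl, ih (by omega), qpos_succ hpos]

lemma QLe.exists_isOcc {σ τ : QPerm} (h : QLe σ τ) : ∃ u, IsOcc qa σ.2 τ.2 u := by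
  induction h with
  | refl => exact ⟨id, isOcc_qa_iff.2 ⟨strictMono_id, fun _ _ => Iff.rfl, fun _ _ _ h => h⟩⟩
  | tail _ hcov ih =>
    obtain ⟨u, hu⟩ := ih
    obtain ⟨v, hv⟩ := hcov.2
    exact ⟨v ∘ u, hv.comp hu⟩

lemma QLe.length_le {σ τ : QPerm} (h : QLe σ τ) : σ.1 ≤ τ.1 :=
  let ⟨_, hu⟩ := h.exists_isOcc
  Fin.le_of_injective _ hu.1.injective

lemma QLe.length_lt {σ τ : QPerm} (h : QLe σ τ) (hne : σ ≠ τ) : σ.1 < τ.1 := by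
  rcases Relation.ReflTransGen.cases_tail h with rfl | ⟨ρ, hσρ, hρτ⟩
  · exact absurd rfl hne
  · have := QLe.length_le hσρ
    have := hρτ.1
    omega

lemma qMuAux_succ_of_le {σ : QPerm} {m : ℕ} :
    ∀ {τ : QPerm}, τ.1 ≤ m → qMuAux (m + 1) σ τ = qMuAux m σ τ := by
  induction m with
  | zero =>
    intro τ hτ
    rw [qMuAux, qMuAux]
    split_ifs
    · rfl
    · refine neg_eq_zero.2 (Finset.sum_eq_zero fun z hz => ?_)
      obtain ⟨-, -, hzτ, hne⟩ := Finset.mem_filter.1 hz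
      exact absurd (hzτ.length_lt hne) (by omega)
  | succ m ih =>
    intro τ hτ
    rw [qMuAux, qMuAux]
    split_ifs
    · rfl
    · refine congrArg Neg.neg (Finset.sum_congr rfl fun z hz => ih ?_)
      obtain ⟨-, -, hzτ, hne⟩ := Finset.mem_filter.1 hz
      have := hzτ.length_lt hne
      omega

lemma qMuAux_of_le {σ τ : QPerm} {m : ℕ} (h : τ.1 ≤ m) : qMuAux m σ τ = qMu σ τ := by
  induction m, h using Nat.le_induction with
  | base => rfl
  | succ m hm ih => rw [qMuAux_succ_of_le hm, ih]

lemma qMu_self (σ : QPerm) : qMu σ σ = 1 := by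
  rw [← qMuAux_of_le (Nat.le_succ σ.1), qMuAux, if_pos rfl]

lemma qMu_of_ne {σ τ : QPerm} (h : σ ≠ τ) :
    qMu σ τ = -∑ z ∈ (permsUpTo τ.1).filter (fun z => QLe σ z ∧ QLe z τ ∧ z ≠ τ), qMu σ z := by
  rw [← qMuAux_of_le (Nat.le_succ τ.1), qMuAux, if_neg h]
  refine congrArg Neg.neg (Finset.sum_congr rfl fun z hz => qMuAux_of_le ?_)
  obtain ⟨-, -, hzτ, -⟩ := Finset.mem_filter.1 hz
  exact hzτ.length_le

/-- The Möbius function `μ(0, i)` of the chain `ℕ`. -/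
def chainMu : ℕ → ℤ
  | 0 => 1
  | 1 => -1
  | _ + 2 => 0

lemma sum_range_chainMu (x : ℕ) : ∑ i ∈ range (x + 1), chainMu i = if x = 0 then 1 else 0 := by
  induction x with
  | zero => rfl
  | succ x ih =>
    rw [Finset.sum_range_succ, ih]
    rcases x with _ | x <;> simp [chainMu]

lemma chainMu_mul_chainMu {p q : ℕ} (hp : 1 ≤ p) (hq : 1 ≤ q) :
    chainMu p * chainMu q = if p + q = 2 then 1 else 0 := by
  obtain ⟨p, rfl⟩ := Nat.exists_eq_add_of_le' hp
  obtain ⟨q, rfl⟩ := Nat.exists_eq_add_of_le' hq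
  rcases p with _ | p <;> rcases q with _ | q <;> simp [chainMu] <;> omega

section Grid

variable {σ : QPerm} {Z : ℕ → ℕ → QPerm} {P Q : ℕ}

lemma filter_interval_eq_image (h00 : Z 0 0 = σ)
    (hle : ∀ x y x' y', x ≤ P → y ≤ Q → x' ≤ P → y' ≤ Q →
      (QLe (Z x y) (Z x' y') ↔ x ≤ x' ∧ y ≤ y'))
    (hsurj : ∀ z, QLe σ z → QLe z (Z P Q) → ∃ x ≤ P, ∃ y ≤ Q, z = Z x y)
    {x y : ℕ} (hx : x ≤ P) (hy : y ≤ Q) :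
    (permsUpTo (Z x y).1).filter (fun z => QLe σ z ∧ QLe z (Z x y) ∧ z ≠ Z x y) =
      ((range (x + 1) ×ˢ range (y + 1)).erase (x, y)).image fun p => Z p.1 p.2 := by
  ext z
  simp only [Finset.mem_filter, Finset.mem_image, Finset.mem_erase, Finset.mem_product,
    Finset.mem_range, Prod.exists, ne_eq, Prod.mk.injEq]
  constructor
  · rintro ⟨-, hσz, hzZ, hne⟩
    have hzτ := Relation.ReflTransGen.trans hzZ ((hle x y P Q hx hy le_rfl le_rfl).2 ⟨hx, hy⟩)
    obtain ⟨x', hx', y', hy', rfl⟩ := hsurj z hσz hzτ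
    have := (hle x' y' x y hx' hy' hx hy).1 hzZ
    exact ⟨x', y', ⟨fun h => hne (by rw [h.1, h.2]), by omega, by omega⟩, rfl⟩
  · rintro ⟨x', y', ⟨hne, hx', hy'⟩, rfl⟩
    have hle' := (hle x' y' x y (by omega) (by omega) hx hy).2 ⟨by omega, by omega⟩
    refine ⟨Finset.mem_sigma.2 ⟨Finset.mem_range.2 (Nat.lt_succ_of_le hle'.length_le),
      Finset.mem_univ _⟩, ?_, hle', fun h => hne ?_⟩
    · rw [← h00]
      exact (hle 0 0 x' y' (Nat.zero_le _) (Nat.zero_le _) (by omega) (by omega)).2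
        ⟨Nat.zero_le _, Nat.zero_le _⟩
    · have := (hle x y x' y' hx hy (by omega) (by omega)).1 (h ▸ Relation.ReflTransGen.refl)
      omega

theorem qMu_grid (h00 : Z 0 0 = σ)
    (hle : ∀ x y x' y', x ≤ P → y ≤ Q → x' ≤ P → y' ≤ Q →
      (QLe (Z x y) (Z x' y') ↔ x ≤ x' ∧ y ≤ y'))
    (hsurj : ∀ z, QLe σ z → QLe z (Z P Q) → ∃ x ≤ P, ∃ y ≤ Q, z = Z x y)
    {x y : ℕ} (hx : x ≤ P) (hy : y ≤ Q) : qMu σ (Z x y) = chainMu x * chainMu y := by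
  induction h : x + y using Nat.strong_induction_on generalizing x y with
  | _ n ih =>
    by_cases h0 : x = 0 ∧ y = 0
    · obtain ⟨rfl, rfl⟩ := h0
      rw [h00, qMu_self]
      rfl
    have hne : σ ≠ Z x y := by
      rintro rfl
      have := (hle x y 0 0 hx hy (Nat.zero_le _) (Nat.zero_le _)).1
        (h00 ▸ Relation.ReflTransGen.refl)
      omega
    have hbox : ∀ p ∈ (range (x + 1) ×ˢ range (y + 1)).erase (x, y),
        p.1 ≤ x ∧ p.2 ≤ y ∧ p.1 + p.2 < n := by
      intro p hp
      simp only [Finset.mem_erase, Finset.mem_product, Finset.mem_range, ne_eq,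
        Prod.ext_iff] at hp
      omega
    have hinj : Set.InjOn (fun p : ℕ × ℕ => Z p.1 p.2)
        ((range (x + 1) ×ˢ range (y + 1)).erase (x, y) : Finset (ℕ × ℕ)) := by
      intro p hp q hq (he : Z p.1 p.2 = Z q.1 q.2)
      obtain ⟨hp₁, hp₂, -⟩ := hbox p hp
      obtain ⟨hq₁, hq₂, -⟩ := hbox q hq
      have hpq := (hle p.1 p.2 q.1 q.2 (by omega) (by omega) (by omega) (by omega)).1
        (he ▸ Relation.ReflTransGen.refl)
      have hqp := (hle q.1 q.2 p.1 p.2 (by omega) (by omega) (by omega) (by omega)).1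
        (he ▸ Relation.ReflTransGen.refl)
      exact Prod.ext (by omega) (by omega)
    have hterm : ∀ p ∈ (range (x + 1) ×ˢ range (y + 1)).erase (x, y),
        qMu σ (Z p.1 p.2) = chainMu p.1 * chainMu p.2 := fun p hp =>
      let ⟨hp₁, hp₂, hlt⟩ := hbox p hp
      ih _ hlt (by omega) (by omega) rfl
    rw [qMu_of_ne hne, filter_interval_eq_image h00 hle hsurj hx hy, Finset.sum_image hinj,
      Finset.sum_congr rfl hterm, Finset.sum_erase_eq_sub (by simp), Finset.sum_product,
      ← Finset.sum_mul_sum, sum_range_chainMu, sum_range_chainMu]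
    split_ifs <;> simp_all

end Grid

/-- Positions of the grid element `(x, y)` above the occurrence `qpos 1 b` of a pattern:
the consecutive block is extended `x` steps to the left, and the isolated first position `1`
becomes `0` once the block reaches position `1`. -/
def gridPos (b x : ℕ) : ℕ → ℕ := qpos (if x + 1 = b then 0 else 1) (b - x)

noncomputable def gridPattern (τ : QPerm) (k b x y : ℕ) : QPerm :=
  τ.patternAt (k + x + y) (gridPos b x)

lemma gridPos_strictMono {b x : ℕ} (hx : x + 1 ≤ b) : StrictMono (gridPos b x) :=
  qpos_strictMono (by split_ifs <;> omega)

lemma gridPattern_cov_succ_right (τ : QPerm) {b x : ℕ} (k y : ℕ) (hx : x + 1 ≤ b) :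
    QCov (gridPattern τ k b x y) (gridPattern τ k b x (y + 1)) :=
  ⟨rfl, _, τ.isOcc_patternAt_comp (h := id) (gridPos_strictMono hx) strictMono_id
    (fun _ _ => rfl) fun i hi => by simp only [id]; omega⟩

lemma gridPattern_cov_succ_left (τ : QPerm) {b x : ℕ} (k y : ℕ) (hx : x + 2 ≤ b) :
    QCov (gridPattern τ k b x y) (gridPattern τ k b (x + 1) y) := by
  have hcomp : gridPos b (x + 1) ∘ qpos (if x + 2 = b then 1 else 0) 2 = gridPos b x := by
    funext i
    simp only [Function.comp_apply, gridPos, qpos]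
    split_ifs <;> omega
  have hocc := τ.isOcc_patternAt_comp (m := k + x + y) (m' := k + (x + 1) + y)
    (h := qpos (if x + 2 = b then 1 else 0) 2)
    (gridPos_strictMono (x := x + 1) (by omega)) (qpos_strictMono (by split_ifs <;> omega))
    (fun _ => qpos_succ) fun i hi => by simp only [qpos]; split_ifs <;> omega
  rw [hcomp] at hocc
  exact ⟨by simp only [gridPattern, QPerm.patternAt]; omega, _, hocc⟩

lemma gridPattern_mono (τ : QPerm) {k b x x' y y' : ℕ} (hxx : x ≤ x') (hx' : x' + 1 ≤ b)
    (hyy : y ≤ y') : QLe (gridPattern τ k b x y) (gridPattern τ k b x' y') := by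
  have hright : QLe (gridPattern τ k b x y) (gridPattern τ k b x y') := by
    induction y', hyy using Nat.le_induction with
    | base => exact Relation.ReflTransGen.refl
    | succ y' _ ih => exact ih.tail (gridPattern_cov_succ_right τ k y' (by omega))
  refine Relation.ReflTransGen.trans hright ?_
  induction x', hxx using Nat.le_induction with
  | base => exact Relation.ReflTransGen.refl
  | succ x' _ ih => exact (ih (by omega)).tail (gridPattern_cov_succ_left τ k y' hx')

lemma gridPattern_zero_zero {σ τ : QPerm} {b : ℕ} (hb : 2 ≤ b)
    (hσ : σ = τ.patternAt σ.1 (qpos 1 b)) : gridPattern τ σ.1 b 0 0 = σ := by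
  rw [gridPattern, gridPos, if_neg (by omega), Nat.sub_zero, add_zero, add_zero]
  exact hσ.symm

lemma gridPattern_top (τ : QPerm) {k b : ℕ} (hb : 1 ≤ b) (hend : b + k ≤ τ.1 + 1) :
    gridPattern τ k b (b - 1) (τ.1 + 1 - b - k) = τ := by
  have hid : gridPos b (b - 1) = id := by
    funext i
    simp only [gridPos, qpos, id]
    split_ifs <;> omega
  rw [gridPattern, hid, show k + (b - 1) + (τ.1 + 1 - b - k) = τ.1 by omega]
  exact τ.patternAt_length_id

lemma exists_eq_gridPattern {σ τ : QPerm} {b : ℕ} (hk : 2 ≤ σ.1)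
    (huniq : ∀ g, IsOcc qa σ.2 τ.2 g → ∀ i, (g i : ℕ) = qpos 1 b i)
    {z : QPerm} (hσz : QLe σ z) (hzτ : QLe z τ) :
    ∃ x ≤ b - 1, ∃ y ≤ τ.1 + 1 - b - σ.1, z = gridPattern τ σ.1 b x y := by
  obtain ⟨F, hF⟩ := hσz.exists_isOcc
  obtain ⟨G, hG⟩ := hzτ.exists_isOcc
  have hkz := hσz.length_le
  obtain ⟨p, s, hps, hFp⟩ := hF.exists_qpos hk
  obtain ⟨p', s', hps', hGp⟩ := hG.exists_qpos (by omega)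
  have hGF := huniq _ (hG.comp hF)
  have h0 : qpos p' s' p = 1 := by
    simpa only [Function.comp_apply, hGp, hFp, qpos_zero] using hGF ⟨0, by omega⟩
  have h1 : s' + s - 1 = b := by
    simpa only [Function.comp_apply, hGp, hFp, qpos_one, qpos_of_ne_zero (by omega : s ≠ 0)]
      using hGF ⟨1, hk⟩
  have hF_last : s + (σ.1 - 1) - 1 < z.1 := by
    simpa only [hFp, qpos_of_ne_zero (by omega : σ.1 - 1 ≠ 0)] using (F ⟨σ.1 - 1, by omega⟩).isLt
  have hG_last : s' + (z.1 - 1) - 1 < τ.1 := by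
    simpa only [hGp, qpos_of_ne_zero (by omega : z.1 - 1 ≠ 0)] using (G ⟨z.1 - 1, by omega⟩).isLt
  refine ⟨b - s', by omega, z.1 - σ.1 - (b - s'), by omega,
    (QPerm.eq_patternAt_of_isOcc hG hGp).trans ?_⟩
  rw [gridPattern, gridPos]
  congr 1
  · omega
  · rw [qpos] at h0
    split_ifs at h0 ⊢ <;> congr 1 <;> omega

lemma gridPattern_le_gridPattern_iff {σ τ : QPerm} {b : ℕ} (hk : 2 ≤ σ.1) (hb : 2 ≤ b)
    (hσ : σ = τ.patternAt σ.1 (qpos 1 b))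
    (huniq : ∀ g, IsOcc qa σ.2 τ.2 g → ∀ i, (g i : ℕ) = qpos 1 b i)
    {x y x' y' : ℕ} (hx : x + 1 ≤ b) (hx' : x' + 1 ≤ b) (hy' : b + σ.1 + y' ≤ τ.1 + 1) :
    QLe (gridPattern τ σ.1 b x y) (gridPattern τ σ.1 b x' y') ↔ x ≤ x' ∧ y ≤ y' := by
  refine ⟨fun h => ?_, fun ⟨hxx, hyy⟩ => gridPattern_mono τ hxx hx' hyy⟩
  obtain ⟨u, hu⟩ := h.exists_isOcc
  obtain ⟨p, s, hps, hup⟩ := hu.exists_qpos (by show 2 ≤ σ.1 + x + y; omega)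
  have hcomp : gridPos b x ∘ qpos (if x + 1 = b then 1 else 0) (x + 1) = qpos 1 b := by
    funext i
    simp only [Function.comp_apply, gridPos, qpos]
    split_ifs <;> omega
  have hW := τ.isOcc_patternAt_comp (m := σ.1) (m' := σ.1 + x + y)
    (h := qpos (if x + 1 = b then 1 else 0) (x + 1)) (gridPos_strictMono hx)
    (qpos_strictMono (by split_ifs <;> omega)) (fun _ => qpos_succ)
    fun i hi => by simp only [qpos]; split_ifs <;> omega
  rw [hcomp, ← eq_of_heq (Sigma.ext_iff.1 hσ).2] at hW
  -- `σ → Z x y → Z x' y' → τ` is the unique occurrence of `σ`; where it sends the second entry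
  -- of `σ` shows that `u` shifts the block by `x' - x`.
  have hG := τ.isOcc_patternAt (m := σ.1 + x' + y') (gridPos_strictMono hx') (fun _ => qpos_succ)
    fun i hi => by simp only [gridPos, qpos]; split_ifs <;> omega
  have h1 : gridPos b x' (u ⟨x + 1, by show x + 1 < σ.1 + x + y; omega⟩) = b :=
    huniq _ (hG.comp (hu.comp hW)) ⟨1, hk⟩
  have hu_last : (u ⟨σ.1 + x + y - 1, by show _ < σ.1 + x + y; omega⟩ : ℕ) < σ.1 + x' + y' :=
    Fin.isLt _
  rw [hup, qpos_of_ne_zero (i := x + 1) (by omega), gridPos,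
    qpos_of_ne_zero (by omega)] at h1
  rw [hup, Fin.val_mk, qpos_of_ne_zero (by omega)] at hu_last
  omega

theorem qMu_eq_chainMu_mul_chainMu {σ τ : QPerm} {b : ℕ} (hk : 2 ≤ σ.1) (hb : 2 ≤ b)
    (hend : b + σ.1 ≤ τ.1 + 1) (hσ : σ = τ.patternAt σ.1 (qpos 1 b))
    (huniq : ∀ g, IsOcc qa σ.2 τ.2 g → ∀ i, (g i : ℕ) = qpos 1 b i) :
    qMu σ τ = chainMu (b - 1) * chainMu (τ.1 + 1 - b - σ.1) := by
  have htop := gridPattern_top τ (k := σ.1) (by omega) hend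
  have hgrid := qMu_grid (Z := gridPattern τ σ.1 b) (P := b - 1) (Q := τ.1 + 1 - b - σ.1)
    (gridPattern_zero_zero hb hσ)
    (fun x y x' y' hx _ hx' hy' =>
      gridPattern_le_gridPattern_iff hk hb hσ huniq (by omega) (by omega) (by omega))
    (fun z hσz hzτ => exists_eq_gridPattern hk huniq hσz (htop ▸ hzτ)) le_rfl le_rfl
  rwa [htop] at hgrid

lemma exists_qpos_of_involves {σ τ : QPerm} {f : Fin σ.1 → Fin τ.1} (hf : IsOcc qa σ.2 τ.2 f)
    (huniq : ∀ g : Fin σ.1 → Fin τ.1, IsOcc qa σ.2 τ.2 g → g = f)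
    (h1 : Involves f 1) (h0 : ¬ Involves f 0) (hn : ¬ Involves f (τ.1 - 1)) :
    2 ≤ σ.1 ∧ ∃ b, 2 ≤ b ∧ b + σ.1 ≤ τ.1 ∧ ∀ i, (f i : ℕ) = qpos 1 b i := by
  obtain ⟨j, hj⟩ := h1
  have hk0 : 0 < σ.1 := j.pos
  have hf0 : (f ⟨0, hk0⟩ : ℕ) = 1 := by
    have hle : f ⟨0, hk0⟩ ≤ f j := hf.1.monotone (Nat.zero_le _)
    have hne : (f ⟨0, hk0⟩ : ℕ) ≠ 0 := fun h => h0 ⟨_, h⟩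
    rw [Fin.le_def, hj] at hle
    omega
  have hk : 2 ≤ σ.1 := by
    by_contra hlt
    have h := congrArg (fun g => (g ⟨0, hk0⟩ : ℕ)) (huniq _ (isOcc_const (by omega) ⟨0, (f j).pos⟩))
    simp only [hf0] at h
    omega
  obtain ⟨p, b, hpb, hfb⟩ := hf.exists_qpos hk
  obtain rfl : p = 1 := by rw [← hf0, hfb, Fin.val_mk, qpos_zero]
  refine ⟨hk, b, hpb, ?_, hfb⟩
  have hlt := (f ⟨σ.1 - 1, by omega⟩).isLt
  have hne : (f ⟨σ.1 - 1, by omega⟩ : ℕ) ≠ τ.1 - 1 := fun h => hn ⟨_, h⟩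
  rw [hfb, Fin.val_mk, qpos_of_ne_zero (by omega)] at hlt hne
  omega

theorem unique_occurrence_second_entry_general (σ τ : QPerm)
    (f : Fin σ.1 → Fin τ.1) (hf : IsOcc qa σ.2 τ.2 f)
    (huniq : ∀ g : Fin σ.1 → Fin τ.1, IsOcc qa σ.2 τ.2 g → g = f)
    (h1 : Involves f 1) (h0 : ¬ Involves f 0) (hn : ¬ Involves f (τ.1 - 1)) :
    (τ.1 - σ.1 = 2 → qMu σ τ = 1) ∧ (τ.1 - σ.1 ≠ 2 → qMu σ τ = 0) := by
  obtain ⟨hk, b, hb, hend, hfb⟩ := exists_qpos_of_involves hf huniq h1 h0 hn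
  rw [qMu_eq_chainMu_mul_chainMu hk hb (by omega) (QPerm.eq_patternAt_of_isOcc hf hfb)
    fun g hg => huniq g hg ▸ hfb, chainMu_mul_chainMu (by omega) (by omega)]
  exact ⟨fun _ => if_pos (by omega), fun _ => if_neg (by omega)⟩

/-- If `σ` occurs precisely once in `τ = a₁a₂⋯aₙ` and the occurrence
involves `a₂` but neither `a₁` nor `aₙ`, then `μ(σ,τ) = 1` if `[σ,τ]` has
rank `2` and `μ(σ,τ) = 0` otherwise. -/
theorem unique_occurrence_second_entry (σ τ : QPerm) (hle : QLe σ τ)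
    (f : Fin σ.1 → Fin τ.1) (hf : IsOcc qa σ.2 τ.2 f)
    (huniq : ∀ g : Fin σ.1 → Fin τ.1, IsOcc qa σ.2 τ.2 g → g = f)
    (h1 : Involves f 1) (h0 : ¬ Involves f 0) (hn : ¬ Involves f (τ.1 - 1)) :
    (τ.1 - σ.1 = 2 → qMu σ τ = 1) ∧ (τ.1 - σ.1 ≠ 2 → qMu σ τ = 0) :=
  unique_occurrence_second_entry_general σ τ f hf huniq h1 h0 hn
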